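/- Let R be a commutative Noetherian ring and i : M → E a morphism of R-modules. Then i is an injective envelope if and only if E is injective, i is a monomorphism, and the induced map Hom_{R_p}(k(p), i_p) : Hom_{R_p}(k(p), M_p) → Hom_{R_p}(k(p), E_p) is an isomorphism for all p ∈ Spec R. -/

import Mathlib

/-! Maps `k(p) → V` of `R_p`-modules are the elements of `V` killed by `p R_p`, so the condition
says that every such element of `E_p` comes from `M_p`. If `i(M)` is essential in `E` and `x/s ∈ E_p`
is killed by `p R_p`, then, `p` being finitely generated, we may assume `p x = 0`; a nonzero
multiple `r x` lies in `i(M)`, and `p x = 0` forces `r ∉ p`, so `x/s` comes from `M_p`. Conversely,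
a nonzero submodule `N` of `E` contains an element `y` whose annihilator is a prime `p` (an
associated prime of `N`); then `y/1 ∈ E_p` is killed by `p R_p`, hence comes from `M_p`, which
yields `u y ∈ i(M)` with `u ∉ p`, so `0 ≠ u y ∈ N ∩ i(M)`. -/

universe u

variable (R : Type u) [CommRing R]

/-- A morphism `f : F → M` with `F` flat is a flat precover if every morphism from a
flat module to `M` factors through `f`. -/
def IsFlatPrecover {F M : Type u} [AddCommGroup F] [AddCommGroup M] [Module R F]
    [Module R M] (f : F →ₗ[R] M) : Prop :=
  Module.Flat R F ∧
    ∀ (F' : Type u) [AddCommGroup F'] [Module R F'], Module.Flat R F' →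
      ∀ g : F' →ₗ[R] M, ∃ h : F' →ₗ[R] F, f ∘ₗ h = g

/-- A flat precover `f : F → M` is a flat cover if every `h : F → F` with `f ∘ h = f`
is an automorphism. -/
def IsFlatCover {F M : Type u} [AddCommGroup F] [AddCommGroup M] [Module R F]
    [Module R M] (f : F →ₗ[R] M) : Prop :=
  IsFlatPrecover R f ∧ ∀ h : F →ₗ[R] F, f ∘ₗ h = f → Function.Bijective h

/-- A morphism `i : M → E` is an injective envelope if `E` is injective, `i` is
injective, and the image of `i` is an essential submodule of `E`. -/
def IsInjectiveEnvelope {M E : Type u} [AddCommGroup M] [AddCommGroup E] [Module R M]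
    [Module R E] (i : M →ₗ[R] E) : Prop :=
  Module.Injective R E ∧ Function.Injective i ∧
    ∀ N : Submodule R E, N ≠ ⊥ → N ⊓ LinearMap.range i ≠ ⊥

/-- An injective cogenerator is an injective module `E` such that `Hom(N, E) ≠ 0`
for every nonzero module `N`. -/
def IsInjectiveCogenerator (E : Type u) [AddCommGroup E] [Module R E] : Prop :=
  Module.Injective R E ∧
    ∀ (N : Type u) [AddCommGroup N] [Module R N], (∃ x : N, x ≠ 0) →
      ∃ g : N →ₗ[R] E, g ≠ 0

open LinearMap Ideal

namespace LinearMap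

variable {A V W : Type*} [CommRing A] [AddCommGroup V] [AddCommGroup W] [Module A V]
  [Module A W] {I : Ideal A}

theorem liftQ_toSpanSingleton_one (v : V) (hv : I ≤ torsionOf A V v) :
    I.liftQ (toSpanSingleton A V v) hv 1 = v :=
  one_smul A v

theorem bijective_comp_quotient_iff {f : V →ₗ[A] W} (hf : Function.Injective f) :
    Function.Bijective (fun g : A ⧸ I →ₗ[A] V => f ∘ₗ g) ↔
      ∀ w : W, I ≤ torsionOf A W w → w ∈ range f := by
  have hinj : Function.Injective (fun g : A ⧸ I →ₗ[A] V => f ∘ₗ g) := fun g h hgh =>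
    LinearMap.ext fun c => hf congr($hgh c)
  rw [Function.Bijective, and_iff_right hinj]
  refine ⟨fun hsurj w hw => ?_, fun hrange g => ?_⟩
  · obtain ⟨g, hg⟩ := hsurj (I.liftQ (toSpanSingleton A W w) hw)
    exact ⟨g 1, congr($hg 1).trans (liftQ_toSpanSingleton_one w hw)⟩
  · have hg : I ≤ torsionOf A W (g 1) := fun a ha => by
      rw [mem_torsionOf_iff, ← map_smul, Algebra.smul_def, mul_one, Ideal.Quotient.algebraMap_eq,
        Ideal.Quotient.eq_zero_iff_mem.mpr ha, map_zero]
    obtain ⟨v, hv⟩ := hrange (g 1) hg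
    have hv' : I ≤ torsionOf A V v := fun a ha =>
      (mem_torsionOf_iff v a).mpr <| hf <| by rw [map_smul, hv, map_zero]; exact hg ha
    refine ⟨I.liftQ (toSpanSingleton A V v) hv', Submodule.linearMap_qext _ (ext_ring ?_)⟩
    exact congr(f $(liftQ_toSpanSingleton_one v hv')).trans hv

end LinearMap

theorem Ideal.torsionOf_le_torsionOf_smul {R M : Type*} [CommSemiring R] [AddCommMonoid M]
    [Module R M] (r : R) (x : M) : torsionOf R M x ≤ torsionOf R M (r • x) := fun a ha => by
  rw [mem_torsionOf_iff, smul_comm, (mem_torsionOf_iff x a).mp ha, smul_zero]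

namespace LocalizedModule

variable {R E : Type*} [CommRing R] [AddCommGroup E] [Module R E]

theorem maximalIdeal_le_torsionOf_iff {p : Ideal R} [p.IsPrime]
    (e : LocalizedModule p.primeCompl E) :
    IsLocalRing.maximalIdeal (Localization.AtPrime p) ≤ torsionOf _ _ e ↔
      p ≤ torsionOf R _ e := by
  rw [← Localization.AtPrime.map_eq_maximalIdeal, Ideal.map_le_iff_le_comap]
  simp only [SetLike.le_def, Ideal.mem_comap, mem_torsionOf_iff, algebraMap_smul]

theorem exists_le_torsionOf_smul_of_fg {S : Submonoid R} {I : Ideal R} (hI : I.FG) (x : E)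
    (hx : I ≤ torsionOf R _ (mk x 1 : LocalizedModule S E)) :
    ∃ t : S, I ≤ torsionOf R E (t • x) := by
  induction I, hI using Submodule.fg_induction generalizing x with
  | singleton a =>
    rw [Submodule.span_singleton_le_iff_mem, mem_torsionOf_iff, smul'_mk,
      ← mkLinearMap_apply, IsLocalizedModule.eq_zero_iff S] at hx
    obtain ⟨t, ht⟩ := hx
    exact ⟨t, (Submodule.span_singleton_le_iff_mem _ _).mpr (by rwa [mem_torsionOf_iff, smul_comm])⟩
  | sup J₁ J₂ _ _ ih₁ ih₂ =>
    rw [sup_le_iff] at hx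
    obtain ⟨t₁, ht₁⟩ := ih₁ x hx.1
    obtain ⟨t₂, ht₂⟩ := ih₂ x hx.2
    refine ⟨t₂ * t₁, sup_le ?_ ?_⟩
    · rw [mul_smul]
      exact ht₁.trans (torsionOf_le_torsionOf_smul (t₂ : R) _)
    · rw [mul_comm, mul_smul]
      exact ht₂.trans (torsionOf_le_torsionOf_smul (t₁ : R) _)

end LocalizedModule

open LocalizedModule in
theorem mem_range_localizedModuleMap_of_essential {R M E : Type*} [CommRing R] [AddCommGroup M]
    [AddCommGroup E] [Module R M] [Module R E] {p : Ideal R} [p.IsPrime] (hp : p.FG)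
    (i : M →ₗ[R] E) (hess : ∀ N : Submodule R E, N ≠ ⊥ → N ⊓ range i ≠ ⊥)
    {e : LocalizedModule p.primeCompl E} (he : p ≤ torsionOf R _ e) :
    e ∈ range (map p.primeCompl i) := by
  induction e using LocalizedModule.induction_on with | h x s =>
  have hx : p ≤ torsionOf R _ (mk x 1 : LocalizedModule p.primeCompl E) := by
    have hxs : (mk x 1 : LocalizedModule p.primeCompl E) = (s : R) • mk x s := by
      rw [smul'_mk, ← Submonoid.smul_def, mk_cancel]
    rw [hxs]
    exact he.trans (torsionOf_le_torsionOf_smul (s : R) _)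
  obtain ⟨t, ht⟩ := exists_le_torsionOf_smul_of_fg hp x hx
  rw [← mk_cancel_common_left t s x]
  by_cases hy : t • x = 0
  · rw [hy, zero_mk]
    exact zero_mem _
  obtain ⟨z, hz, hz0⟩ := (Submodule.ne_bot_iff _).mp
    (hess _ ((Submodule.span_singleton_eq_bot (R := R)).not.mpr hy))
  obtain ⟨hzy, w, hw⟩ := Submodule.mem_inf.mp hz
  obtain ⟨r, rfl⟩ := Submodule.mem_span_singleton.mp hzy
  have hr : r ∉ p := fun hr => hz0 (ht hr)
  refine ⟨mk w (⟨r, hr⟩ * (t * s)), ?_⟩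
  rw [map_mk, hw, ← mk_cancel_common_left ⟨r, hr⟩ (t * s) (t • x)]
  rfl

open LocalizedModule in
theorem essential_of_forall_mem_range_localizedModuleMap {R M E : Type*} [CommRing R]
    [IsNoetherianRing R] [AddCommGroup M] [AddCommGroup E] [Module R M] [Module R E]
    (i : M →ₗ[R] E)
    (h : ∀ (p : Ideal R) [p.IsPrime] (e : LocalizedModule p.primeCompl E),
      p ≤ torsionOf R _ e → e ∈ range (map p.primeCompl i))
    (N : Submodule R E) (hN : N ≠ ⊥) : N ⊓ range i ≠ ⊥ := by
  have : Nontrivial N := Submodule.nontrivial_iff_ne_bot.mpr hN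
  obtain ⟨p, hp, y, hpy⟩ := (associatedPrimes.nonempty R N).imp fun _ h =>
    isAssociatedPrime_iff.mp h
  replace hpy : p = torsionOf R E y := hpy.trans <| by
    ext r
    simp [Submodule.mem_colon_singleton, Subtype.ext_iff]
  subst hpy
  obtain ⟨e, he⟩ := h _ (mk (y : E) 1) fun r hr => by
    rw [mem_torsionOf_iff, smul'_mk, (mem_torsionOf_iff _ _).mp hr, zero_mk]
  induction e using LocalizedModule.induction_on with | h w s =>
  obtain ⟨u, hu⟩ := mk_eq.mp ((map_mk _ _ _ _).symm.trans he)
  rw [one_smul] at hu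
  refine (Submodule.ne_bot_iff _).mpr ⟨((u : R) * s) • (y : E), ?_, ?_⟩
  · refine Submodule.mem_inf.mpr ⟨N.smul_mem _ y.2, (u : R) • w, ?_⟩
    rw [map_smul, mul_smul]
    exact hu
  · exact (u * s).2

theorem injectiveEnvelope_iff_residue_hom_bijective [IsNoetherianRing R]
    {M E : Type u} [AddCommGroup M] [AddCommGroup E] [Module R M] [Module R E]
    (i : M →ₗ[R] E) :
    IsInjectiveEnvelope R i ↔
      Module.Injective R E ∧ Function.Injective i ∧
        ∀ (p : Ideal R) (hp : p.IsPrime),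
          Function.Bijective
            (fun g : IsLocalRing.ResidueField (Localization.AtPrime p) →ₗ[Localization.AtPrime p]
                LocalizedModule p.primeCompl M =>
              (LocalizedModule.map p.primeCompl i) ∘ₗ g) := by
  refine and_congr_right fun _ => and_congr_right fun hi => ?_
  have hsocle (p : Ideal R) [p.IsPrime] :
      Function.Bijective (fun g : IsLocalRing.ResidueField (Localization.AtPrime p)
          →ₗ[Localization.AtPrime p] LocalizedModule p.primeCompl M =>
        (LocalizedModule.map p.primeCompl i) ∘ₗ g) ↔
      ∀ e : LocalizedModule p.primeCompl E, p ≤ torsionOf R _ e →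
        e ∈ range (LocalizedModule.map p.primeCompl i) := by
    refine (LinearMap.bijective_comp_quotient_iff (I := IsLocalRing.maximalIdeal _)
      (LocalizedModule.map_injective _ i hi)).trans ?_
    simp only [LocalizedModule.maximalIdeal_le_torsionOf_iff]
  exact ⟨fun hess p _ => (hsocle p).mpr fun _ =>
      mem_range_localizedModuleMap_of_essential (IsNoetherian.noetherian p) i hess,
    fun h => essential_of_forall_mem_range_localizedModuleMap i fun p _ => (hsocle p).mp (h p ‹_›)⟩
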